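/- arXiv:2412.08146 — 3 statements merged into one kernel-verified Lean document; each statement's English description precedes it below -/
import Mathlib

section
/- Let C and C′ be ℤ-graded, ℤ-filtered chain complexes over 𝔽₂[U] that are free and finitely generated as 𝔽₂[U]-modules. If there is a filtered chain homotopy equivalence f : C → C′, then for every t ∈ [0,2] the t-modified complexes C^t and (C′)^t are chain homotopy equivalent as gr_t-graded complexes over ℛ. -/
open scoped NNReal
open Polynomial

abbrev F2 := ZMod 2
abbrev PU := Polynomial F2
abbrev LongR := HahnSeries ℝ≥0 F2

noncomputable example : CommRing LongR := inferInstance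

noncomputable def v (α : ℝ≥0) : LongR := HahnSeries.single α 1

/-- A finitely generated, free, `ℤ`-graded `ℤ`-filtered chain complex over `𝔽₂[U]`,
presented by a basis with Maslov grading `M`, Alexander filtration level `A`, and
structure coefficients `c`, so that `∂ x = ∑ y, c x y • U ^ ((M y - M x + 1)/2) • y`. -/
structure BasedComplex where
  ι : Type
  [fin : Fintype ι]
  [dec : DecidableEq ι]
  M : ι → ℤ
  A : ι → ℤ
  c : ι → ι → F2
  hM : ∀ x y, c x y ≠ 0 → ∃ k : ℕ, M y = M x - 1 + 2 * k
  hA : ∀ x y, c x y ≠ 0 → 2 * (A y - A x) ≤ M y - M x + 1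
  d2 : ∀ x z, (∑ y, c x y * c y z) = 0

attribute [instance] BasedComplex.fin BasedComplex.dec

namespace BasedComplex

variable (C : BasedComplex)

/-- The underlying free `𝔽₂[U]`-module. -/
abbrev PMod := C.ι → PU

/-- The differential of the complex over `𝔽₂[U]`. -/
noncomputable def pDiff : C.PMod →ₗ[PU] C.PMod where
  toFun f := fun y => ∑ x, f x * (Polynomial.C (C.c x y) * Polynomial.X ^ ((C.M y - C.M x + 1) / 2).toNat)
  map_add' f g := by
    funext y
    simp [add_mul, Finset.sum_add_distrib]
  map_smul' r f := by
    funext y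
    simp [Finset.mul_sum, mul_assoc]

/-- Homogeneous of Maslov degree `m` (the basis element `U^k x` has degree `M x - 2k`). -/
def PHomog (m : ℤ) (f : C.PMod) : Prop :=
  ∀ x k, (f x).coeff k ≠ 0 → C.M x - 2 * (k : ℤ) = m

/-- Lies in Alexander filtration level `≤ a` (the element `U^k x` has level `A x - k`). -/
def PInFilt (a : ℤ) (f : C.PMod) : Prop :=
  ∀ x k, (f x).coeff k ≠ 0 → C.A x - (k : ℤ) ≤ a

end BasedComplex

/-- A graded, filtered chain map over `𝔽₂[U]`. -/
structure PChainMap (C D : BasedComplex) where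
  toFun : C.PMod →ₗ[PU] D.PMod
  comm : ∀ f, toFun (C.pDiff f) = D.pDiff (toFun f)
  graded : ∀ m f, C.PHomog m f → D.PHomog m (toFun f)
  filtered : ∀ a f, C.PInFilt a f → D.PInFilt a (toFun f)

/-- Filtered chain homotopy between two maps (char 2, so signs are irrelevant). -/
def PHomotopic (C D : BasedComplex) (φ ψ : C.PMod →ₗ[PU] D.PMod) : Prop :=
  ∃ H : C.PMod →ₗ[PU] D.PMod,
    (∀ a f, C.PInFilt a f → D.PInFilt a (H f)) ∧
    (∀ m f, C.PHomog m f → D.PHomog (m + 1) (H f)) ∧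
    ∀ f, D.pDiff (H f) + H (C.pDiff f) = φ f + ψ f

/-- Filtered chain homotopy equivalence of complexes over `𝔽₂[U]`. -/
def FilteredHtpyEquiv (C D : BasedComplex) : Prop :=
  ∃ (φ : PChainMap C D) (ψ : PChainMap D C),
    PHomotopic C C (ψ.toFun.comp φ.toFun) LinearMap.id ∧
    PHomotopic D D (φ.toFun.comp ψ.toFun) LinearMap.id

namespace BasedComplex

variable (C : BasedComplex)

/-- `gr_t` of a basis element: `M x - t * A x`. -/
noncomputable def grt (t : ℝ) (x : C.ι) : ℝ := (C.M x : ℝ) - t * (C.A x : ℝ)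

/-- Exponent of `v` in the `t`-modified differential. -/
noncomputable def texp (t : ℝ) (x y : C.ι) : ℝ≥0 := (C.grt t y - C.grt t x + 1).toNNReal

/-- The `t`-modified differential `∂_t x = ∑ y, c x y • v ^ (gr_t y - gr_t x + 1) • y`,
on the `t`-modified complex `C^t = ⊕_x ℛ⟨x⟩`. -/
noncomputable def tDiff (t : ℝ) : (C.ι → LongR) →ₗ[LongR] (C.ι → LongR) where
  toFun f := fun y => ∑ x, f x * HahnSeries.single (C.texp t x y) (C.c x y)
  map_add' f g := by
    funext y
    simp [add_mul, Finset.sum_add_distrib]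
  map_smul' r f := by
    funext y
    simp [Finset.mul_sum, mul_assoc]

/-- Homogeneous of `gr_t`-degree `d` in `C^t` (the element `v^α x` has degree `gr_t x - α`). -/
def THomog (t d : ℝ) (f : C.ι → LongR) : Prop :=
  ∀ x α, (f x).coeff α ≠ 0 → C.grt t x - (α : ℝ) = d

noncomputable abbrev tCycles (t : ℝ) : Submodule LongR (C.ι → LongR) :=
  LinearMap.ker (C.tDiff t)

/-- Homology of the `t`-modified complex, as an `ℛ`-module. -/
noncomputable abbrev tHomology (t : ℝ) :=
  C.tCycles t ⧸ (LinearMap.range (C.tDiff t)).comap (C.tCycles t).subtype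

noncomputable def tClass (t : ℝ) (f : C.ι → LongR) (hf : f ∈ C.tCycles t) :
    C.tHomology t :=
  Submodule.Quotient.mk ⟨f, hf⟩

/-- The set of `gr_t`-gradings of homogeneous, non-torsion classes in `H(C^t)`. -/
noncomputable def UpsSet (t : ℝ) : Set ℝ :=
  {d | ∃ (f : C.ι → LongR) (hf : f ∈ C.tCycles t),
    C.THomog t d f ∧ ∀ r : LongR, r ≠ 0 → r • C.tClass t f hf ≠ 0}

end BasedComplex

/-- A graded chain map of `t`-modified complexes over `ℛ`. -/
def TChainMapProp (C D : BasedComplex) (t : ℝ)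
    (φ : (C.ι → LongR) →ₗ[LongR] (D.ι → LongR)) : Prop :=
  (∀ f, φ (C.tDiff t f) = D.tDiff t (φ f)) ∧
  ∀ d f, C.THomog t d f → D.THomog t d (φ f)

/-- Graded chain homotopy equivalence of `t`-modified complexes over `ℛ`. -/
def THtpyEquiv (C D : BasedComplex) (t : ℝ) : Prop :=
  ∃ (φ : (C.ι → LongR) →ₗ[LongR] (D.ι → LongR))
    (ψ : (D.ι → LongR) →ₗ[LongR] (C.ι → LongR))
    (H₁ : (C.ι → LongR) →ₗ[LongR] (C.ι → LongR))
    (H₂ : (D.ι → LongR) →ₗ[LongR] (D.ι → LongR)),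
    TChainMapProp C D t φ ∧ TChainMapProp D C t ψ ∧
    (∀ d f, C.THomog t d f → C.THomog t (d + 1) (H₁ f)) ∧
    (∀ f, C.tDiff t (H₁ f) + H₁ (C.tDiff t f) = ψ (φ f) + f) ∧
    (∀ d f, D.THomog t d f → D.THomog t (d + 1) (H₂ f)) ∧
    (∀ f, D.tDiff t (H₂ f) + H₂ (D.tDiff t f) = φ (ψ f) + f)

/-!
A filtered `𝔽₂[U]`-linear map `F` between free complexes that shifts the Maslov grading by `s`
is determined by its matrix at `U = 1`: the entry `U ^ k` from `x` to `y` can be recovered from the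
gradings. Replacing it by `v ^ (gr_t y - gr_t x - s)` gives an `ℛ`-linear map of `gr_t`-degree
`s`, and the exponent equals `2k - t (A y - A x)` with `A y - A x ≤ k`, so it is nonnegative
precisely because `0 ≤ t ≤ 2`. Exponents add along composites, so this substitution respects
sums, composition and identities and sends `∂` to `∂_t`; hence it carries the chain maps and
filtered homotopies of a filtered homotopy equivalence to those of a graded homotopy equivalence
of the `t`-modified complexes.
-/

section TwistMatrix

open Matrix

variable {R : Type*} [Semiring R] {ι κ μ : Type*}

noncomputable def twistMatrix (g : ι → ℝ) (g' : κ → ℝ) (r : ℝ) (E : Matrix κ ι R) :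
    Matrix κ ι (HahnSeries ℝ≥0 R) :=
  Matrix.of fun y x => HahnSeries.single (g' y - g x + r).toNNReal (E y x)

def TwistNonneg (g : ι → ℝ) (g' : κ → ℝ) (r : ℝ) (E : Matrix κ ι R) : Prop :=
  ∀ y x, E y x ≠ 0 → 0 ≤ g' y - g x + r

theorem twistMatrix_add (g : ι → ℝ) (g' : κ → ℝ) (r : ℝ) (E E' : Matrix κ ι R) :
    twistMatrix g g' r (E + E') = twistMatrix g g' r E + twistMatrix g g' r E' := by
  ext y x
  simp [twistMatrix]

theorem twistMatrix_one [DecidableEq ι] (g : ι → ℝ) :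
    twistMatrix g g 0 (1 : Matrix ι ι R) = 1 := by
  ext y x
  by_cases h : y = x <;> simp [twistMatrix, Matrix.one_apply, h]

theorem twistMatrix_mul [Fintype κ] {g₁ : ι → ℝ} {g₂ : κ → ℝ} {g₃ : μ → ℝ} {r r' s : ℝ}
    {E : Matrix κ ι R} {E' : Matrix μ κ R}
    (hE : TwistNonneg g₁ g₂ r E) (hE' : TwistNonneg g₂ g₃ r' E') (hs : r + r' = s) :
    twistMatrix g₂ g₃ r' E' * twistMatrix g₁ g₂ r E = twistMatrix g₁ g₃ s (E' * E) := by
  ext z x : 1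
  simp only [Matrix.mul_apply, twistMatrix, Matrix.of_apply, HahnSeries.single_mul_single]
  rw [show ∀ (a : ℝ≥0) (c : κ → R), HahnSeries.single a (∑ y, c y) = ∑ y, HahnSeries.single a (c y)
    from fun a c => map_sum (HahnSeries.single.addMonoidHom a) c _]
  refine Finset.sum_congr rfl fun y _ => ?_
  by_cases h : E' z y * E y x = 0
  · simp [h]
  rw [← Real.toNNReal_add
    (hE' z y (left_ne_zero_of_mul h)) (hE y x (right_ne_zero_of_mul h)), ← hs]
  ring_nf

theorem twistMatrix_mulVec_homogeneous [Fintype ι] {g : ι → ℝ} {g' : κ → ℝ} {r d : ℝ}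
    {E : Matrix κ ι R} (hE : TwistNonneg g g' r E) {f : ι → HahnSeries ℝ≥0 R}
    (hf : ∀ x α, (f x).coeff α ≠ 0 → g x - α = d) {y : κ} {α : ℝ≥0}
    (hα : ((twistMatrix g g' r E *ᵥ f) y).coeff α ≠ 0) :
    g' y - α = d - r := by
  rw [Matrix.mulVec, dotProduct, HahnSeries.coeff_sum] at hα
  obtain ⟨x, -, hx⟩ := Finset.exists_ne_zero_of_sum_ne_zero hα
  obtain ⟨β, hβ, γ, hγ, rfl⟩ := Set.mem_add.mp (HahnSeries.support_mul_subset hx)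
  obtain rfl : β = (g' y - g x + r).toNNReal := HahnSeries.support_single_subset hβ
  have hEyx : E y x ≠ 0 := by simpa [twistMatrix] using hβ
  have hexp : ((g' y - g x + r).toNNReal : ℝ) = g' y - g x + r :=
    Real.coe_toNNReal _ (hE y x hEyx)
  have hγd := hf x γ hγ
  push_cast
  linarith

end TwistMatrix

namespace BasedComplex

variable {C D E : BasedComplex}

noncomputable def evalMatrix (F : C.PMod →ₗ[PU] D.PMod) : Matrix D.ι C.ι F2 :=
  (LinearMap.toMatrix' F).map (Polynomial.evalRingHom 1)

theorem evalMatrix_comp (F : C.PMod →ₗ[PU] D.PMod) (G : D.PMod →ₗ[PU] E.PMod) :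
    evalMatrix (G ∘ₗ F) = evalMatrix G * evalMatrix F := by
  rw [evalMatrix, LinearMap.toMatrix'_comp, Matrix.map_mul]
  rfl

theorem evalMatrix_add (F G : C.PMod →ₗ[PU] D.PMod) :
    evalMatrix (F + G) = evalMatrix F + evalMatrix G := by
  rw [evalMatrix, map_add, Matrix.map_add _ (map_add _)]
  rfl

theorem evalMatrix_id : evalMatrix (LinearMap.id : C.PMod →ₗ[PU] C.PMod) = 1 := by
  rw [evalMatrix, LinearMap.toMatrix'_id, Matrix.map_one _ (map_zero _) (map_one _)]

theorem pDiff_single (x y : C.ι) :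
    C.pDiff (Pi.single x 1) y =
      Polynomial.C (C.c x y) * Polynomial.X ^ ((C.M y - C.M x + 1) / 2).toNat := by
  simp [pDiff, Pi.single_apply]

theorem evalMatrix_pDiff : evalMatrix C.pDiff = Matrix.of fun y x => C.c x y := by
  ext y x
  simp [evalMatrix, LinearMap.toMatrix'_apply, pDiff_single]

noncomputable def tModify (t r : ℝ) (F : C.PMod →ₗ[PU] D.PMod) :
    (C.ι → LongR) →ₗ[LongR] (D.ι → LongR) :=
  Matrix.toLin' (twistMatrix (C.grt t) (D.grt t) r (evalMatrix F))

theorem tDiff_eq_tModify (t : ℝ) : C.tDiff t = tModify t 1 C.pDiff := by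
  ext f y
  simp [tDiff, tModify, texp, twistMatrix, evalMatrix_pDiff, Matrix.mulVec, dotProduct, mul_comm]

theorem tModify_comp {t r r' s : ℝ} {F : C.PMod →ₗ[PU] D.PMod} {G : D.PMod →ₗ[PU] E.PMod}
    (hF : TwistNonneg (C.grt t) (D.grt t) r (evalMatrix F))
    (hG : TwistNonneg (D.grt t) (E.grt t) r' (evalMatrix G)) (hs : r + r' = s)
    (f : C.ι → LongR) :
    tModify t r' G (tModify t r F f) = tModify t s (G ∘ₗ F) f := by
  rw [tModify, tModify, tModify, evalMatrix_comp, ← twistMatrix_mul hF hG hs, Matrix.toLin'_mul]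
  rfl

theorem tModify_add (t r : ℝ) (F G : C.PMod →ₗ[PU] D.PMod) :
    tModify t r (F + G) = tModify t r F + tModify t r G := by
  rw [tModify, evalMatrix_add, twistMatrix_add, map_add]
  rfl

theorem tModify_id (t : ℝ) : tModify t 0 (LinearMap.id : C.PMod →ₗ[PU] C.PMod) = LinearMap.id := by
  rw [tModify, evalMatrix_id, twistMatrix_one, Matrix.toLin'_one]

theorem tModify_tHomog {t r d : ℝ} {F : C.PMod →ₗ[PU] D.PMod}
    (hF : TwistNonneg (C.grt t) (D.grt t) r (evalMatrix F)) {f : C.ι → LongR}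
    (hf : C.THomog t d f) : D.THomog t (d - r) (tModify t r F f) :=
  fun _ _ hα => twistMatrix_mulVec_homogeneous hF hf hα

theorem twistNonneg_evalMatrix {t : ℝ} (ht : t ∈ Set.Icc (0 : ℝ) 2)
    (F : C.PMod →ₗ[PU] D.PMod) (r : ℝ)
    (hM : ∀ x y k, (F (Pi.single x 1) y).coeff k ≠ 0 → (D.M y : ℝ) - 2 * k + r = C.M x)
    (hA : ∀ x y k, (F (Pi.single x 1) y).coeff k ≠ 0 → D.A y - (k : ℤ) ≤ C.A x) :
    TwistNonneg (C.grt t) (D.grt t) r (evalMatrix F) := by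
  intro y x hyx
  have hF : F (Pi.single x 1) y ≠ 0 := fun h0 => hyx (by simp [evalMatrix, h0])
  set k := (F (Pi.single x 1) y).natDegree
  have hk : (F (Pi.single x 1) y).coeff k ≠ 0 := Polynomial.leadingCoeff_ne_zero.mpr hF
  have hMk := hM x y k hk
  have hAk : (D.A y : ℝ) - C.A x ≤ k := by
    exact_mod_cast (by linarith [hA x y k hk] : D.A y - C.A x ≤ (k : ℤ))
  -- the exponent is `2k - t (A y - A x)`
  rw [grt, grt]
  nlinarith [mul_nonneg ht.1 (sub_nonneg.mpr hAk), mul_nonneg (sub_nonneg.mpr ht.2) k.cast_nonneg]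

theorem eq_and_eq_zero_of_coeff_single_ne_zero {x x' : C.ι} {k : ℕ}
    (h : ((Pi.single x 1 : C.PMod) x').coeff k ≠ 0) : x' = x ∧ k = 0 := by
  by_cases hx : x' = x
  · subst hx
    simp only [Pi.single_eq_same, Polynomial.coeff_one] at h
    exact ⟨rfl, by simpa [eq_comm] using h⟩
  · simp [hx] at h

theorem pHomog_single (x : C.ι) : C.PHomog (C.M x) (Pi.single x 1) := by
  intro x' k h
  obtain ⟨rfl, rfl⟩ := eq_and_eq_zero_of_coeff_single_ne_zero h
  simp

theorem pInFilt_single (x : C.ι) : C.PInFilt (C.A x) (Pi.single x 1) := by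
  intro x' k h
  obtain ⟨rfl, rfl⟩ := eq_and_eq_zero_of_coeff_single_ne_zero h
  simp

theorem twistNonneg_of_graded_of_filtered {t : ℝ} (ht : t ∈ Set.Icc (0 : ℝ) 2)
    (F : C.PMod →ₗ[PU] D.PMod) (s : ℤ)
    (hgr : ∀ m f, C.PHomog m f → D.PHomog (m + s) (F f))
    (hfilt : ∀ a f, C.PInFilt a f → D.PInFilt a (F f)) :
    TwistNonneg (C.grt t) (D.grt t) (-s) (evalMatrix F) := by
  refine twistNonneg_evalMatrix ht F (-s) (fun x y k hk => ?_)
    (fun x y k hk => hfilt _ _ (pInFilt_single x) y k hk)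
  have hMk : D.M y - 2 * (k : ℤ) = C.M x + s := hgr _ _ (pHomog_single x) y k hk
  have hMk' : (D.M y : ℝ) - 2 * k = C.M x + s := by exact_mod_cast hMk
  linarith

theorem twistNonneg_pDiff {t : ℝ} (ht : t ∈ Set.Icc (0 : ℝ) 2) :
    TwistNonneg (C.grt t) (C.grt t) 1 (evalMatrix C.pDiff) := by
  have hcoeff : ∀ x y (k : ℕ), (C.pDiff (Pi.single x 1) y).coeff k ≠ 0 →
      C.M y = C.M x - 1 + 2 * (k : ℤ) ∧ C.A y - C.A x ≤ (k : ℤ) := by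
    intro x y k hk
    rw [pDiff_single, Polynomial.coeff_C_mul, Polynomial.coeff_X_pow] at hk
    have hc : C.c x y ≠ 0 := by rintro h0; simp [h0] at hk
    have hkM : k = ((C.M y - C.M x + 1) / 2).toNat := by by_contra hne; simp [hne] at hk
    obtain ⟨j, hj⟩ := C.hM x y hc
    have hA := C.hA x y hc
    constructor <;> omega
  refine twistNonneg_evalMatrix ht _ 1 (fun x y k hk => ?_) (fun x y k hk => ?_)
  · have hMk : (C.M y : ℝ) = C.M x - 1 + 2 * k := by exact_mod_cast (hcoeff x y k hk).1
    linarith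
  · linarith [(hcoeff x y k hk).2]

end BasedComplex

open BasedComplex

section

variable {C D : BasedComplex}

theorem PChainMap.twistNonneg {t : ℝ} (ht : t ∈ Set.Icc (0 : ℝ) 2) (φ : PChainMap C D) :
    TwistNonneg (C.grt t) (D.grt t) 0 (evalMatrix φ.toFun) := by
  simpa using twistNonneg_of_graded_of_filtered ht φ.toFun 0 (by simpa using φ.graded) φ.filtered

theorem PChainMap.tChainMapProp {t : ℝ} (ht : t ∈ Set.Icc (0 : ℝ) 2) (φ : PChainMap C D) :
    TChainMapProp C D t (tModify t 0 φ.toFun) := by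
  refine ⟨fun f => ?_, fun d f hf => by simpa using tModify_tHomog (φ.twistNonneg ht) hf⟩
  have hcomm : φ.toFun ∘ₗ C.pDiff = D.pDiff ∘ₗ φ.toFun := LinearMap.ext φ.comm
  rw [tDiff_eq_tModify, tDiff_eq_tModify,
    tModify_comp (twistNonneg_pDiff ht) (φ.twistNonneg ht) (add_zero 1),
    tModify_comp (φ.twistNonneg ht) (twistNonneg_pDiff ht) (zero_add 1), hcomm]

theorem PHomotopic.exists_tHomotopy {t : ℝ} (ht : t ∈ Set.Icc (0 : ℝ) 2)
    {F G : C.PMod →ₗ[PU] D.PMod} (h : PHomotopic C D F G) :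
    ∃ H : (C.ι → LongR) →ₗ[LongR] (D.ι → LongR),
      (∀ d f, C.THomog t d f → D.THomog t (d + 1) (H f)) ∧
      ∀ f, D.tDiff t (H f) + H (C.tDiff t f) = tModify t 0 F f + tModify t 0 G f := by
  obtain ⟨H, hfilt, hgr, hH⟩ := h
  have hHnn : TwistNonneg (C.grt t) (D.grt t) (-1) (evalMatrix H) := by
    simpa using twistNonneg_of_graded_of_filtered ht H 1 hgr hfilt
  refine ⟨tModify t (-1) H, fun d f hf => by simpa using tModify_tHomog hHnn hf, fun f => ?_⟩
  have hsum : D.pDiff ∘ₗ H + H ∘ₗ C.pDiff = F + G := LinearMap.ext hH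
  rw [tDiff_eq_tModify, tDiff_eq_tModify,
    tModify_comp hHnn (twistNonneg_pDiff ht) (neg_add_cancel 1),
    tModify_comp (twistNonneg_pDiff ht) hHnn (add_neg_cancel 1),
    ← LinearMap.add_apply, ← tModify_add, hsum, tModify_add, LinearMap.add_apply]

end

/-- If `C` and `C'` are `ℤ`-graded, `ℤ`-filtered chain complexes over `𝔽₂[U]`, free and
finitely generated as `𝔽₂[U]`-modules, and there is a filtered chain homotopy equivalence
`C → C'`, then for every `t ∈ [0,2]` the `t`-modified complexes `C^t` and `(C')^t` are
chain homotopy equivalent as `gr_t`-graded complexes over `ℛ`. -/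
theorem tModified_htpyEquiv_of_filteredHtpyEquiv (C C' : BasedComplex)
    (h : FilteredHtpyEquiv C C') :
    ∀ t ∈ Set.Icc (0 : ℝ) 2, THtpyEquiv C C' t := by
  obtain ⟨φ, ψ, hψφ, hφψ⟩ := h
  intro t ht
  obtain ⟨H₁, hH₁gr, hH₁⟩ := hψφ.exists_tHomotopy ht
  obtain ⟨H₂, hH₂gr, hH₂⟩ := hφψ.exists_tHomotopy ht
  refine ⟨tModify t 0 φ.toFun, tModify t 0 ψ.toFun, H₁, H₂, φ.tChainMapProp ht,
    ψ.tChainMapProp ht, hH₁gr, fun f => ?_, hH₂gr, fun f => ?_⟩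
  · rw [hH₁, tModify_comp (φ.twistNonneg ht) (ψ.twistNonneg ht) (add_zero 0), tModify_id,
      LinearMap.id_apply]
  · rw [hH₂, tModify_comp (ψ.twistNonneg ht) (φ.twistNonneg ht) (add_zero 0), tModify_id,
      LinearMap.id_apply]
end

section
/- For a finitely generated ℤ-graded, ℤ-filtered free chain complex C over 𝔽₂[U] and any t ∈ [0,2], there is an isomorphism of graded chain complexes over ℛ: (C*)^t ≅ (C^t)*, where C* = Hom_{𝔽₂[U]}(C, 𝔽₂[U]) and (C^t)* = Hom_ℛ(C^t, ℛ). -/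
open scoped NNReal
open Polynomial

noncomputable example : CommRing LongR := inferInstance

namespace BasedComplex

/-- `C ⊗ 𝒲`: a second copy of the generators in bidegree `(M-1, A-1)`, with
block-diagonal differential (the differential on `𝒲` vanishes). -/
def tensorW (C : BasedComplex) : BasedComplex where
  ι := C.ι ⊕ C.ι
  M := Sum.elim C.M fun x => C.M x - 1
  A := Sum.elim C.A fun x => C.A x - 1
  c := fun p q =>
    match p, q with
    | .inl x, .inl y => C.c x y
    | .inr x, .inr y => C.c x y
    | _, _ => 0
  hM := by
    rintro (x | x) (y | y) h <;> simp_all <;>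
      obtain ⟨k, hk⟩ := C.hM _ _ h <;> exact ⟨k, by omega⟩
  hA := by
    rintro (x | x) (y | y) h <;> simp_all <;> have := C.hA _ _ h <;> omega
  d2 := by
    rintro (x | x) (z | z) <;>
      simp [Fintype.sum_sum_type] <;> simpa using C.d2 x z

/-- The dual complex `C* = Hom_{𝔽₂[U]}(C, 𝔽₂[U])`, in the basis dual to the given one. -/
def dualC (C : BasedComplex) : BasedComplex where
  ι := C.ι
  M := fun x => -C.M x
  A := fun x => -C.A x
  c := fun x y => C.c y x
  hM := by
    intro x y h
    obtain ⟨k, hk⟩ := C.hM y x h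
    exact ⟨k, show -C.M y = -C.M x - 1 + 2 * k by omega⟩
  hA := by
    intro x y h
    have := C.hA y x h
    show 2 * (-C.A y - -C.A x) ≤ -C.M y - -C.M x + 1
    omega
  d2 := by
    intro x z
    simpa [mul_comm] using C.d2 z x

/-- Shift of grading (by `a`) and filtration (by `b`). -/
def shiftC (C : BasedComplex) (a b : ℤ) : BasedComplex where
  ι := C.ι
  M := fun x => C.M x + a
  A := fun x => C.A x + b
  c := C.c
  hM := by
    intro x y h
    obtain ⟨k, hk⟩ := C.hM x y h
    exact ⟨k, show C.M y + a = C.M x + a - 1 + 2 * k by omega⟩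
  hA := by
    intro x y h
    have := C.hA x y h
    show 2 * ((C.A y + b) - (C.A x + b)) ≤ (C.M y + a) - (C.M x + a) + 1
    omega
  d2 := C.d2

end BasedComplex

/-- The differential on the dual complex `(C^t)* = Hom_ℛ(C^t, ℛ)`, given by
`(dφ)(x) = φ(∂_t x)`. -/
noncomputable def tDualDiff (C : BasedComplex) (t : ℝ) :
    ((C.ι → LongR) →ₗ[LongR] LongR) →ₗ[LongR] ((C.ι → LongR) →ₗ[LongR] LongR) where
  toFun φ := φ.comp (C.tDiff t)
  map_add' φ ψ := by ext f; simp
  map_smul' r φ := by ext f; simp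

/-- A Hahn series `r ∈ ℛ` is homogeneous of degree `d` when its support is contained in
`{-d}` (recall `gr(v^α) = -α`). -/
def THomogR (d : ℝ) (r : LongR) : Prop := ∀ α : ℝ≥0, r.coeff α ≠ 0 → -(α : ℝ) = d

/-- A morphism `φ ∈ (C^t)*` is homogeneous of degree `m` if it raises `gr_t`-degree by
`m`, i.e. its value on the degree-`gr_t x` basis vector `x` is homogeneous of degree
`m + gr_t x`. -/
def TDualHomog (C : BasedComplex) (t m : ℝ)
    (φ : (C.ι → LongR) →ₗ[LongR] LongR) : Prop :=
  ∀ x : C.ι, THomogR (m + C.grt t x) (φ (Pi.single x 1))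

/-! `(C^t)*` is identified with `ℛ^ι` by the dual basis, `f ↦ (g ↦ ∑ x, g x * f x)`. Under this
pairing the dual of `∂_t` has matrix entries `c y x • v ^ (gr_t x - gr_t y + 1)`, and these are
exactly the entries of `∂_t` on `(C*)^t`, because dualizing negates `gr_t`. For the same reason
`v^α x*` has degree `-gr_t x - α` on both sides. -/

lemma Module.piEquiv_apply_single {ι R M : Type*} [Fintype ι] [DecidableEq ι] [CommSemiring R]
    [AddCommMonoid M] [Module R M] (v : ι → M) (i : ι) :
    Module.piEquiv ι R M v (Pi.single i 1) = v i := by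
  rw [Module.piEquiv_apply_apply, Finset.sum_eq_single i (fun j _ hj => by simp [hj]) (by simp)]
  simp

namespace BasedComplex

variable (C : BasedComplex) (t : ℝ)

lemma dualC_grt (x : C.ι) : C.dualC.grt t x = -C.grt t x := by
  simp only [grt, dualC, Int.cast_neg]
  ring

lemma dualC_texp (x y : C.ι) : C.dualC.texp t x y = C.texp t y x := by
  simp only [texp, dualC_grt]
  ring_nf

lemma sum_mul_dualC_tDiff (f g : C.ι → LongR) :
    ∑ x, g x * C.dualC.tDiff t f x = ∑ y, C.tDiff t g y * f y := by
  simp only [tDiff, LinearMap.coe_mk, AddHom.coe_mk, Finset.mul_sum, Finset.sum_mul]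
  rw [Finset.sum_comm]
  refine Finset.sum_congr rfl fun x _ => Finset.sum_congr rfl fun y _ => ?_
  -- `C.dualC.ι` is `C.ι` only after unfolding `dualC`, hence `erw` here and below.
  erw [dualC_texp]
  simp only [dualC]
  ring

lemma piEquiv_dualC_tDiff (f : C.ι → LongR) :
    Module.piEquiv C.ι LongR LongR (C.dualC.tDiff t f) =
      tDualDiff C t (Module.piEquiv C.ι LongR LongR f) := by
  refine LinearMap.ext fun g => ?_
  simp only [tDualDiff, LinearMap.coe_mk, AddHom.coe_mk, LinearMap.comp_apply,
    Module.piEquiv_apply_apply, smul_eq_mul]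
  erw [Module.piEquiv_apply_apply]
  exact C.sum_mul_dualC_tDiff t f g

lemma dualC_tHomog_iff (m : ℝ) (f : C.ι → LongR) :
    C.dualC.THomog t m f ↔ TDualHomog C t m (Module.piEquiv C.ι LongR LongR f) := by
  simp only [THomog, TDualHomog, THomogR, Module.piEquiv_apply_single]
  refine forall_congr' fun x => forall_congr' fun α => imp_congr_right fun _ => ?_
  have hgr := C.dualC_grt t x
  constructor <;> intro h <;> linarith

end BasedComplex

theorem tModified_dual_iso_general (C : BasedComplex) (t : ℝ) :
    ∃ e : ((C.dualC).ι → LongR) ≃ₗ[LongR] ((C.ι → LongR) →ₗ[LongR] LongR),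
      (∀ f, e ((C.dualC).tDiff t f) = tDualDiff C t (e f)) ∧
      (∀ m f, (C.dualC).THomog t m f ↔ TDualHomog C t m (e f)) :=
  ⟨Module.piEquiv C.ι LongR LongR, C.piEquiv_dualC_tDiff t, C.dualC_tHomog_iff t⟩

/-- For a finitely generated `ℤ`-graded, `ℤ`-filtered free chain complex `C` over `𝔽₂[U]`
and any `t ∈ [0,2]`, there is an isomorphism of graded chain complexes over `ℛ`:
`(C*)^t ≅ (C^t)*`, where `C* = Hom_{𝔽₂[U]}(C, 𝔽₂[U])` and `(C^t)* = Hom_ℛ(C^t, ℛ)`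
with differential `(dφ)(x) = φ(∂_t x)`. -/
theorem tModified_dual_iso (C : BasedComplex) (t : ℝ) (ht : t ∈ Set.Icc (0 : ℝ) 2) :
    ∃ e : ((C.dualC).ι → LongR) ≃ₗ[LongR] ((C.ι → LongR) →ₗ[LongR] LongR),
      (∀ f, e ((C.dualC).tDiff t f) = tDualDiff C t (e f)) ∧
      (∀ m f, (C.dualC).THomog t m f ↔ TDualHomog C t m (e f)) :=
  tModified_dual_iso_general C t
end

section
/- For a finitely generated ℤ-graded, ℤ-filtered free chain complex C over 𝔽₂[U] and t ∈ [0,2], the t-modification of C ⊗ 𝒲 is isomorphic, as a graded chain complex over ℛ, to C^t ⊗ W_t, where W_t is the two-dimensional graded 𝔽₂-vector space with generators in gr_t-gradings 0 and −1 + t. -/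
open scoped NNReal
open Polynomial

noncomputable example : CommRing LongR := inferInstance

namespace BasedComplex

variable (C : BasedComplex) (t : ℝ)

@[simp]
lemma tensorW_c_inl_inl (x y : C.ι) : C.tensorW.c (.inl x) (.inl y) = C.c x y := rfl

@[simp]
lemma tensorW_c_inr_inr (x y : C.ι) : C.tensorW.c (.inr x) (.inr y) = C.c x y := rfl

@[simp]
lemma tensorW_c_inl_inr (x y : C.ι) : C.tensorW.c (.inl x) (.inr y) = 0 := rfl

@[simp]
lemma tensorW_c_inr_inl (x y : C.ι) : C.tensorW.c (.inr x) (.inl y) = 0 := rfl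

@[simp]
lemma tensorW_grt_inr (x : C.ι) : C.tensorW.grt t (.inr x) = C.grt t x + (-1 + t) := by
  simp only [grt, tensorW, Sum.elim_inr]
  push_cast
  ring

@[simp]
lemma tensorW_texp_inl_inl (x y : C.ι) : C.tensorW.texp t (.inl x) (.inl y) = C.texp t x y :=
  rfl

@[simp]
lemma tensorW_texp_inr_inr (x y : C.ι) : C.tensorW.texp t (.inr x) (.inr y) = C.texp t x y := by
  simp only [texp, tensorW_grt_inr, add_sub_add_right_eq_sub]

lemma tDiff_tensorW_inl (f : C.tensorW.ι → LongR) (y : C.ι) :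
    C.tensorW.tDiff t f (.inl y) = C.tDiff t (f ∘ Sum.inl) y := by
  refine (Fintype.sum_sum_type _).trans ?_
  simp only [tensorW_c_inl_inl, tensorW_c_inr_inl, tensorW_texp_inl_inl, map_zero, mul_zero,
    Finset.sum_const_zero, add_zero]
  rfl

lemma tDiff_tensorW_inr (f : C.tensorW.ι → LongR) (y : C.ι) :
    C.tensorW.tDiff t f (.inr y) = C.tDiff t (f ∘ Sum.inr) y := by
  refine (Fintype.sum_sum_type _).trans ?_
  simp only [tensorW_c_inl_inr, tensorW_c_inr_inr, tensorW_texp_inr_inr, map_zero, mul_zero,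
    Finset.sum_const_zero, zero_add]
  rfl

lemma tHomog_tensorW_iff (d : ℝ) (f : C.tensorW.ι → LongR) :
    C.tensorW.THomog t d f ↔
      C.THomog t d (f ∘ Sum.inl) ∧ C.THomog t (d - (-1 + t)) (f ∘ Sum.inr) := by
  refine Sum.forall.trans <|
    and_congr Iff.rfl (forall₂_congr fun _ _ => imp_congr_right fun _ => ?_)
  rw [tensorW_grt_inr]
  constructor <;> intro h <;> linarith

end BasedComplex

theorem tModified_tensorW_iso_general (C : BasedComplex) (t : ℝ) :
    ∃ e : ((C.tensorW).ι → LongR) ≃ₗ[LongR] ((C.ι → LongR) × (C.ι → LongR)),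
      (∀ f, e ((C.tensorW).tDiff t f) = (C.tDiff t (e f).1, C.tDiff t (e f).2)) ∧
      (∀ d f, (C.tensorW).THomog t d f ↔
        (C.THomog t d (e f).1 ∧ C.THomog t (d - (-1 + t)) (e f).2)) :=
  ⟨LinearEquiv.sumArrowLequivProdArrow _ _ _ _,
    fun f => Prod.ext (funext (C.tDiff_tensorW_inl t f)) (funext (C.tDiff_tensorW_inr t f)),
    C.tHomog_tensorW_iff t⟩

/-- For a finitely generated `ℤ`-graded, `ℤ`-filtered free chain complex `C` over
`𝔽₂[U]` and `t ∈ [0,2]`, the `t`-modification of `C ⊗ 𝒲` is isomorphic, as a graded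
chain complex over `ℛ`, to `C^t ⊗ W_t`, where `W_t` is the two-dimensional graded
`𝔽₂`-vector space with generators in `gr_t`-gradings `0` and `−1 + t`.  Here
`C^t ⊗ W_t` is presented as two copies of `C^t`; an element `(f, g)` is homogeneous of
degree `d` iff `f` is homogeneous of degree `d` and `g` of degree `d − (−1 + t)`, and
the differential acts diagonally. -/
theorem tModified_tensorW_iso (C : BasedComplex) (t : ℝ) (ht : t ∈ Set.Icc (0 : ℝ) 2) :
    ∃ e : ((C.tensorW).ι → LongR) ≃ₗ[LongR] ((C.ι → LongR) × (C.ι → LongR)),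
      (∀ f, e ((C.tensorW).tDiff t f) = (C.tDiff t (e f).1, C.tDiff t (e f).2)) ∧
      (∀ d f, (C.tensorW).THomog t d f ↔
        (C.THomog t d (e f).1 ∧ C.THomog t (d - (-1 + t)) (e f).2)) :=
  tModified_tensorW_iso_general C t
end
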